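/- arXiv:2011.06112 — 3 statements merged into one kernel-verified Lean document; each statement's English description precedes it below -/
import Mathlib

section
/- Let G be the complete graph on vertices v_0, ..., v_k (with k = βh + 1) where consecutive vertices v_i, v_{i+1} are joined by weight-1 edges and all other pairs by weight-L edges, with L > k. If a metric d̃ on the vertex set satisfies d^(βh)(u,v) ≤ d̃(u,v) ≤ α·d^(h)(u,v) for all u,v, then α(βh+1) ≥ L. -/
/-- Total weight of a walk given as its list of vertices. -/
def walkWeight {V : Type*} (w : V → V → ℝ) : List V → ℝ
  | a :: b :: l => w a b + walkWeight w (b :: l)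
  | _ => 0

/-- In a complete graph, a walk from `u` to `v` is any list of vertices with no two
consecutive vertices equal that starts at `u` and ends at `v`. -/
def IsWalk {V : Type*} (l : List V) (u v : V) : Prop :=
  l.head? = some u ∧ l.getLast? = some v ∧ l.Chain' (· ≠ ·)

/-- The `h`-hop-constrained distance: the minimum weight of a walk between `u` and `v`
using at most `h` edges. -/
noncomputable def hopDist {V : Type*} (w : V → V → ℝ) (h : ℕ) (u v : V) : ℝ :=
  sInf {c | ∃ l : List V, IsWalk l u v ∧ l.length ≤ h + 1 ∧ walkWeight w l = c}


lemma walkWeight_nonneg {V : Type*} (w : V → V → ℝ) (hw : ∀ a b, 0 ≤ w a b) :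
    ∀ l : List V, 0 ≤ walkWeight w l
  | [] => le_refl 0
  | [_] => le_refl 0
  | a :: b :: l => add_nonneg (hw a b) (walkWeight_nonneg w hw (b :: l))

lemma chain_dist {n : ℕ} (adj : Fin n → Fin n → Prop)
    (hadj : ∀ a b, adj a b → Nat.dist (a:ℕ) (b:ℕ) ≤ 1) :
    ∀ (l : List (Fin n)) (u v : Fin n), l.Chain' adj → l.head? = some u →
      l.getLast? = some v → Nat.dist (u:ℕ) (v:ℕ) ≤ l.length - 1
  | [], u, v, _, h1, _ => by simp at h1
  | [a], u, v, _, h1, h2 => by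
      simp at h1 h2; subst h1; subst h2; simp [Nat.dist]
  | a :: b :: l, u, v, hc, h1, h2 => by
      simp at h1; subst h1
      simp only [List.Chain', List.isChain_cons_cons] at hc
      have h2' : (b :: l).getLast? = some v := by
        rw [← h2]; simp
      have := chain_dist adj hadj (b :: l) b v hc.2 rfl h2'
      have htri := Nat.dist.triangle_inequality (a:ℕ) (b:ℕ) (v:ℕ)
      have h1' := hadj a b hc.1
      simp only [List.length_cons] at *
      omega

lemma walkWeight_ge {V : Type*} (w : V → V → ℝ) (adj : V → V → Prop) (L : ℝ)
    (hw0 : ∀ a b, 0 ≤ w a b) (hwL : ∀ a b, ¬ adj a b → L ≤ w a b) (hL : 0 ≤ L) :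
    ∀ l : List V, ¬ l.Chain' adj → L ≤ walkWeight w l
  | [], hc => absurd List.isChain_nil hc
  | [a], hc => absurd (List.isChain_singleton a) hc
  | a :: b :: l, hc => by
      simp only [List.Chain', List.isChain_cons_cons] at hc
      by_cases hab : adj a b
      · have : ¬ (b :: l).Chain' adj := fun hx => hc ⟨hab, hx⟩
        have := walkWeight_ge w adj L hw0 hwL hL (b :: l) this
        have := hw0 a b
        show L ≤ w a b + walkWeight w (b :: l)
        linarith
      · have := hwL a b hab
        have := walkWeight_nonneg w hw0 (b :: l)
        show L ≤ w a b + walkWeight w (b :: l)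
        linarith

/-- No metric can approximate hop-constrained distances with small stretch:
on the path graph with `k = βh + 1` unit edges (all other pairs having weight `L`),
any metric `d` with `d^(βh)(u,v) ≤ d u v ≤ α · d^(h)(u,v)` must satisfy
`α(βh + 1) ≥ L`. -/
theorem no_metric_approximation
    (h β : ℕ) (hh : 1 ≤ h) (hβ : 1 ≤ β)
    (α L : ℝ) (hα : 1 ≤ α) (hL : ((β * h + 1 : ℕ) : ℝ) < L)
    (w : Fin (β * h + 2) → Fin (β * h + 2) → ℝ)
    (hw : ∀ i j : Fin (β * h + 2),
      w i j = if (i : ℕ) + 1 = (j : ℕ) ∨ (j : ℕ) + 1 = (i : ℕ) then 1 else L)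
    (d : Fin (β * h + 2) → Fin (β * h + 2) → ℝ)
    (hdsymm : ∀ x y, d x y = d y x)
    (hdrefl : ∀ x, d x x = 0)
    (hdtri : ∀ x y z, d x z ≤ d x y + d y z)
    (happrox : ∀ u v, hopDist w (β * h) u v ≤ d u v ∧ d u v ≤ α * hopDist w h u v) :
    L ≤ α * (β * h + 1) := by
  have hbh : 1 ≤ β * h := Nat.one_le_iff_ne_zero.mpr (by positivity)
  have hα0 : (0:ℝ) ≤ α := by linarith
  have hk0 : (0:ℝ) ≤ ((β * h + 1 : ℕ) : ℝ) := by positivity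
  have hL0 : (0:ℝ) ≤ L := le_trans hk0 hL.le
  have hw0 : ∀ a b, 0 ≤ w a b := by
    intro a b; rw [hw]; split
    · norm_num
    · exact hL0
  have hbdd : ∀ m u v, BddBelow {c | ∃ l : List (Fin (β*h+2)),
      IsWalk l u v ∧ l.length ≤ m + 1 ∧ walkWeight w l = c} := by
    intro m u v
    refine ⟨0, ?_⟩
    rintro c ⟨l, _, _, rfl⟩
    exact walkWeight_nonneg w hw0 l
  -- walk of length 2 between two distinct vertices
  have hmem2 : ∀ (u v : Fin (β*h+2)) (m : ℕ), u ≠ v → 1 ≤ m →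
      w u v ∈ {c | ∃ l : List (Fin (β*h+2)),
        IsWalk l u v ∧ l.length ≤ m + 1 ∧ walkWeight w l = c} := by
    intro u v m huv hm
    refine ⟨[u, v], ⟨rfl, ?_, ?_⟩, by simpa using Nat.succ_le_succ hm, ?_⟩
    · simp
    · exact List.isChain_pair.mpr huv
    · show w u v + walkWeight w [v] = w u v
      simp [walkWeight]
  -- Step bound: hopDist between consecutive vertices ≤ 1
  have hstep : ∀ (m : ℕ) (hm : m + 1 ≤ β*h+1),
      hopDist w h ⟨m, by omega⟩ ⟨m+1, by omega⟩ ≤ 1 := by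
    intro m hm
    have hne : (⟨m, by omega⟩ : Fin (β*h+2)) ≠ ⟨m+1, by omega⟩ := by
      simp [Fin.ext_iff]
    have := hmem2 ⟨m, by omega⟩ ⟨m+1, by omega⟩ h hne hh
    have hw1 : w (⟨m, by omega⟩ : Fin (β*h+2)) ⟨m+1, by omega⟩ = 1 := by
      rw [hw]; simp
    rw [hw1] at this
    exact csInf_le (hbdd h _ _) this
  -- Telescoping
  have htel : ∀ (m : ℕ) (hm : m ≤ β*h+1),
      d ⟨0, by omega⟩ ⟨m, by omega⟩ ≤ α * m := by
    intro m
    induction m with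
    | zero => intro _; rw [hdrefl]; simp
    | succ m ih =>
      intro hm
      have h1 := ih (by omega)
      have h2 := (happrox ⟨m, by omega⟩ ⟨m+1, by omega⟩).2
      have h3 := hstep m hm
      have h4 : d (⟨m, by omega⟩ : Fin (β*h+2)) ⟨m+1, by omega⟩ ≤ α := by
        calc d (⟨m, by omega⟩ : Fin (β*h+2)) ⟨m+1, by omega⟩
            ≤ α * hopDist w h ⟨m, by omega⟩ ⟨m+1, by omega⟩ := h2
          _ ≤ α * 1 := by exact mul_le_mul_of_nonneg_left h3 hα0
          _ = α := mul_one α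
      have h5 := hdtri ⟨0, by omega⟩ ⟨m, by omega⟩ (⟨m+1, by omega⟩ : Fin (β*h+2))
      push_cast
      push_cast at h1
      linarith
  -- Lower bound
  have hlow : L ≤ hopDist w (β*h) ⟨0, by omega⟩ ⟨β*h+1, by omega⟩ := by
    apply le_csInf
    · have hne : (⟨0, by omega⟩ : Fin (β*h+2)) ≠ ⟨β*h+1, by omega⟩ := by
        simp [Fin.ext_iff]
      exact ⟨_, hmem2 _ _ (β*h) hne hbh⟩
    · rintro c ⟨l, ⟨hh1, hh2, _⟩, hlen, rfl⟩
      by_cases hch : l.Chain' (fun x y : Fin (β*h+2) => (x:ℕ)+1 = y ∨ (y:ℕ)+1 = x)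
      · exfalso
        have hd := chain_dist _ (fun a b hab => by simp [Nat.dist]; omega)
          l _ _ hch hh1 hh2
        simp [Nat.dist] at hd
        omega
      · refine walkWeight_ge w _ L hw0 (fun a b hab => ?_) hL0 l hch
        rw [hw, if_neg hab]
  have hup := (happrox ⟨0, by omega⟩ ⟨β*h+1, by omega⟩).1
  have := htel (β*h+1) le_rfl
  push_cast at this ⊢
  linarith
end

section
/- Let G be a graph, W ⊆ V(G), and h ≥ 1. Suppose P and P' are walks of at most h edges, each having both endpoints in W and no internal vertices in W, and suppose P and P' share a common vertex x. Then the endpoints of P and of P' all lie in the same connected component of the h-hop connectivity graph (W, 𝒫^(h)(W)). -/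
/-- The `h`-hop connectivity graph of `W` with respect to `G`: vertices are the elements
of `W`, with an edge between `a` and `b` whenever there is a simple path in `G` of at
most `h` edges between them whose only vertices in `W` are its two endpoints. -/
def connGraph {V : Type*} (G : SimpleGraph V) (W : Set V) (h : ℕ) : SimpleGraph W :=
  SimpleGraph.fromRel (fun a b =>
    ∃ p : G.Walk (a : V) (b : V), p.IsPath ∧ p.length ≤ h ∧
      ∀ x ∈ p.support, x ∈ W → x = (a : V) ∨ x = (b : V))

lemma reach_of_short_walk {V : Type*} (G : SimpleGraph V) (W : Set V) (h : ℕ) :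
    ∀ n {a b : V} (ha : a ∈ W) (hb : b ∈ W) (Q : G.Walk a b),
      Q.length ≤ h → Q.length ≤ n →
      (connGraph G W h).Reachable ⟨a, ha⟩ ⟨b, hb⟩ := by
  classical
  intro n
  induction n with
  | zero =>
    intro a b ha hb Q _ hn
    have : a = b := Q.eq_of_length_eq_zero (Nat.le_zero.mp hn)
    subst this
    exact SimpleGraph.Reachable.refl _
  | succ n ih =>
    intro a b ha hb Q hQh hn
    by_cases hcase : ∃ w ∈ Q.support, w ∈ W ∧ w ≠ a ∧ w ≠ b
    · obtain ⟨w, hws, hwW, hwa, hwb⟩ := hcase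
      have hspec := Q.take_spec hws
      have hlen : (Q.takeUntil w hws).length + (Q.dropUntil w hws).length = Q.length := by
        conv_rhs => rw [← hspec]
        rw [SimpleGraph.Walk.length_append]
      have h1 : (Q.takeUntil w hws).length ≥ 1 := by
        by_contra hc
        exact hwa ((Q.takeUntil w hws).eq_of_length_eq_zero (by omega)).symm
      have h2 : (Q.dropUntil w hws).length ≥ 1 := by
        by_contra hc
        exact hwb ((Q.dropUntil w hws).eq_of_length_eq_zero (by omega))
      have r1 := ih ha hwW (Q.takeUntil w hws) (by omega) (by omega)
      have r2 := ih hwW hb (Q.dropUntil w hws) (by omega) (by omega)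
      exact r1.trans r2
    · push_neg at hcase
      by_cases hab : a = b
      · subst hab; exact SimpleGraph.Reachable.refl _
      · apply SimpleGraph.Adj.reachable
        show (connGraph G W h).Adj ⟨a, ha⟩ ⟨b, hb⟩
        rw [connGraph, SimpleGraph.fromRel_adj]
        refine ⟨fun hc => hab (congrArg Subtype.val hc), Or.inl ?_⟩
        refine ⟨Q.toPath, Q.toPath.2, le_trans (Q.length_bypass_le) hQh, ?_⟩
        intro y hy hyW
        have hy' : y ∈ Q.support := Q.support_bypass_subset hy
        by_contra hc
        push_neg at hc
        exact hc.2 (hcase y hy' hyW hc.1)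

/-- If two walks of at most `h` edges, each with both endpoints in `W` and no internal
vertices in `W`, share a common vertex, then all four endpoints lie in the same
connected component of the `h`-hop connectivity graph `(W, 𝒫^(h)(W))`. -/
theorem shared_vertex_same_component {V : Type*} (G : SimpleGraph V) (W : Set V) (h : ℕ)
    {u v u' v' : V} (hu : u ∈ W) (hv : v ∈ W) (hu' : u' ∈ W) (hv' : v' ∈ W)
    (hne : u ≠ v) (hne' : u' ≠ v')
    (P : G.Walk u v) (P' : G.Walk u' v')
    (hPlen : P.length ≤ h) (hP'len : P'.length ≤ h)
    (hPint : ∀ x ∈ P.support, x ∈ W → x = u ∨ x = v)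
    (hP'int : ∀ x ∈ P'.support, x ∈ W → x = u' ∨ x = v')
    (x : V) (hx : x ∈ P.support) (hx' : x ∈ P'.support) :
    (connGraph G W h).Reachable ⟨u, hu⟩ ⟨v, hv⟩ ∧
    (connGraph G W h).Reachable ⟨u, hu⟩ ⟨u', hu'⟩ ∧
    (connGraph G W h).Reachable ⟨u', hu'⟩ ⟨v', hv'⟩ := by
  classical
  have ruv : (connGraph G W h).Reachable ⟨u, hu⟩ ⟨v, hv⟩ :=
    reach_of_short_walk G W h P.length hu hv P hPlen le_rfl
  have ruv' : (connGraph G W h).Reachable ⟨u', hu'⟩ ⟨v', hv'⟩ :=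
    reach_of_short_walk G W h P'.length hu' hv' P' hP'len le_rfl
  have key : ∀ (a : V) (ha : a ∈ W) (Q : G.Walk a x) (b : V) (hb : b ∈ W) (Q' : G.Walk b x),
      Q.length + Q'.length ≤ h → (connGraph G W h).Reachable ⟨a, ha⟩ ⟨b, hb⟩ := by
    intro a ha Q b hb Q' hle
    refine reach_of_short_walk G W h (Q.length + Q'.length) ha hb (Q.append Q'.reverse) ?_ ?_ <;>
      simp [SimpleGraph.Walk.length_append, SimpleGraph.Walk.length_reverse, hle]
  have hsum : (P.takeUntil x hx).length + (P.dropUntil x hx).length = P.length := by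
    conv_rhs => rw [← P.take_spec hx]
    rw [SimpleGraph.Walk.length_append]
  have hsum' : (P'.takeUntil x hx').length + (P'.dropUntil x hx').length = P'.length := by
    conv_rhs => rw [← P'.take_spec hx']
    rw [SimpleGraph.Walk.length_append]
  have hdrev : ((P.dropUntil x hx).reverse).length = (P.dropUntil x hx).length :=
    SimpleGraph.Walk.length_reverse _
  have hdrev' : ((P'.dropUntil x hx').reverse).length = (P'.dropUntil x hx').length :=
    SimpleGraph.Walk.length_reverse _
  have hc1 : (P.takeUntil x hx).length ≤ h / 2 ∨ (P.dropUntil x hx).length ≤ h / 2 := by omega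
  have hc2 : (P'.takeUntil x hx').length ≤ h / 2 ∨ (P'.dropUntil x hx').length ≤ h / 2 := by
    omega
  have ruu' : (connGraph G W h).Reachable ⟨u, hu⟩ ⟨u', hu'⟩ := by
    rcases hc1 with h1 | h1 <;> rcases hc2 with h2 | h2
    · exact key u hu (P.takeUntil x hx) u' hu' (P'.takeUntil x hx') (by omega)
    · exact (key u hu (P.takeUntil x hx) v' hv' ((P'.dropUntil x hx').reverse)
        (by omega)).trans ruv'.symm
    · exact ruv.trans (key v hv ((P.dropUntil x hx).reverse) u' hu' (P'.takeUntil x hx')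
        (by omega))
    · exact ruv.trans ((key v hv ((P.dropUntil x hx).reverse) v' hv'
        ((P'.dropUntil x hx').reverse) (by omega)).trans ruv'.symm)
  exact ⟨ruv, ruu', ruv'⟩
end

section
/- If G is a connected tree with (hop) diameter at most βh, then for any W ⊆ V(G) there exists a collection 𝒫 of paths in G with endpoints in W such that: (1) the graph (W, 𝒫) is connected; (2) every edge of G lies on at most 2 paths of 𝒫; and (3) every path in 𝒫 has at most βh edges. -/
open SimpleGraph

namespace TreeEuler
variable {V : Type*} {G : SimpleGraph V} {W : Set V} [DecidablePred (· ∈ W)]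

def go (G : SimpleGraph V) (W : Set V) [DecidablePred (· ∈ W)] :
    ∀ {u v w : V}, G.Walk u v → G.Walk v w → List (Σ a : V, Σ b : V, G.Walk a b)
  | u, v, _, acc, SimpleGraph.Walk.nil => [⟨u, v, acc⟩]
  | _, _, _, acc, SimpleGraph.Walk.cons (v := x) h q =>
    if _ : x ∈ W then ⟨_, x, acc.concat h⟩ :: go G W SimpleGraph.Walk.nil q
    else go G W (acc.concat h) q

lemma go_endpoints : ∀ {u v w : V} (acc : G.Walk u v) (p : G.Walk v w),
    u ∈ W → w ∈ W → ∀ q ∈ go G W acc p, q.1 ∈ W ∧ q.2.1 ∈ W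
  | u, v, _, acc, SimpleGraph.Walk.nil, hu, hw, q, hq => by
    simp only [go, List.mem_singleton] at hq; subst hq; exact ⟨hu, hw⟩
  | u, v, w, acc, SimpleGraph.Walk.cons (v := x) h p, hu, hw, q, hq => by
    rw [go] at hq
    split at hq
    · next hx =>
      rcases List.mem_cons.1 hq with rfl | hq
      · exact ⟨hu, hx⟩
      · exact go_endpoints _ p hx hw q hq
    · exact go_endpoints _ p hu hw q hq

lemma go_countP [DecidableEq V] : ∀ {u v w : V} (acc : G.Walk u v) (p : G.Walk v w)
    (e : Sym2 V),
    (go G W acc p).countP (fun q => decide (e ∈ q.2.2.edges)) ≤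
      (acc.edges ++ p.edges).count e
  | u, v, _, acc, SimpleGraph.Walk.nil, e => by
    simp only [go, List.countP_singleton, Walk.edges_nil, List.append_nil]
    split
    · next hmem => exact List.count_pos_iff.2 (by simpa using hmem)
    · simp
  | u, v, w, acc, SimpleGraph.Walk.cons (v := x) h p, e => by
    rw [go]
    split
    · have h2 := go_countP (SimpleGraph.Walk.nil : G.Walk x x) p e
      simp only [Walk.edges_nil, List.nil_append] at h2
      have hsplit : ((⟨u, x, acc.concat h⟩ : (Σ a : V, Σ b : V, G.Walk a b)) ::
          go G W SimpleGraph.Walk.nil p).countP (fun q => decide (e ∈ q.2.2.edges)) ≤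
          (acc.concat h).edges.count e + p.edges.count e := by
        rw [List.countP_cons]
        have h3 : (if e ∈ (acc.concat h).edges then 1 else 0) ≤
            (acc.concat h).edges.count e := by
          split
          · next hmem => exact List.count_pos_iff.2 hmem
          · simp
        simp only [decide_eq_true_eq]
        omega
      have hEq : (acc.concat h).edges ++ p.edges =
          acc.edges ++ (SimpleGraph.Walk.cons h p).edges := by
        simp [Walk.edges_concat, Walk.edges_cons]
      refine hsplit.trans (le_of_eq ?_)
      rw [← List.count_append, hEq]
    · have h2 := go_countP (acc.concat h) p e
      have hEq : (acc.concat h).edges ++ p.edges =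
          acc.edges ++ (SimpleGraph.Walk.cons h p).edges := by
        simp [Walk.edges_concat, Walk.edges_cons]
      exact hEq ▸ h2

def relOf (G : SimpleGraph V) (W : Set V) (L : List (Σ a : V, Σ b : V, G.Walk a b))
    (a b : W) : Prop :=
  ∃ q ∈ L, q.1 = (a : V) ∧ q.2.1 = (b : V)

lemma fromRel_mono {α : Type*} {r r' : α → α → Prop} (h : ∀ a b, r a b → r' a b) :
    SimpleGraph.fromRel r ≤ SimpleGraph.fromRel r' := by
  intro a b hab
  rw [fromRel_adj] at *
  exact ⟨hab.1, hab.2.imp (h a b) (h b a)⟩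

lemma go_connect : ∀ {u v w : V} (acc : G.Walk u v) (p : G.Walk v w)
    (hu : u ∈ W) (hv : v ∈ W → v = u) (y : V), y ∈ p.support → ∀ (hyW : y ∈ W),
    (SimpleGraph.fromRel (relOf G W (go G W acc p))).Reachable ⟨u, hu⟩ ⟨y, hyW⟩
  | u, v, _, acc, SimpleGraph.Walk.nil, hu, hv, y, hy, hyW => by
    simp only [Walk.support_nil, List.mem_singleton] at hy
    subst hy
    have heq : (⟨u, hu⟩ : W) = ⟨y, hyW⟩ := Subtype.ext (hv hyW).symm
    rw [heq]
  | u, v, _, acc, SimpleGraph.Walk.cons (v := x) h p, hu, hv, y, hy, hyW => by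
    rw [Walk.support_cons, List.mem_cons] at hy
    rw [go]
    by_cases hx : x ∈ W
    · rw [dif_pos hx]
      rcases hy with rfl | hy
      · have heq : (⟨u, hu⟩ : W) = ⟨y, hyW⟩ := Subtype.ext (hv hyW).symm
        rw [heq]
      · have ih := go_connect SimpleGraph.Walk.nil p hx (fun _ => rfl) y hy hyW
        have hmono : SimpleGraph.fromRel (relOf G W (go G W SimpleGraph.Walk.nil p)) ≤
            SimpleGraph.fromRel (relOf G W
              (⟨u, x, acc.concat h⟩ :: go G W SimpleGraph.Walk.nil p)) := by
          refine fromRel_mono ?_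
          rintro a b ⟨q, hq, h1, h2⟩
          exact ⟨q, List.mem_cons_of_mem _ hq, h1, h2⟩
        have step : (SimpleGraph.fromRel (relOf G W
            (⟨u, x, acc.concat h⟩ :: go G W SimpleGraph.Walk.nil p))).Reachable
            ⟨u, hu⟩ ⟨x, hx⟩ := by
          by_cases hux : u = x
          · have heq : (⟨u, hu⟩ : W) = ⟨x, hx⟩ := Subtype.ext hux
            rw [heq]
          · refine Adj.reachable ?_
            rw [fromRel_adj]
            exact ⟨fun hc => hux (congrArg Subtype.val hc),
              Or.inl ⟨⟨u, x, acc.concat h⟩, List.mem_cons_self, rfl, rfl⟩⟩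
        exact step.trans (Reachable.mono hmono ih)
    · rw [dif_neg hx]
      rcases hy with rfl | hy
      · have heq : (⟨u, hu⟩ : W) = ⟨y, hyW⟩ := Subtype.ext (hv hyW).symm
        rw [heq]
      · exact go_connect (acc.concat h) p hu (fun hxW => absurd hxW hx) y hy hyW

lemma concat_isPath {u v w : V} {p : G.Walk u v} (hp : p.IsPath) (h : G.Adj v w)
    (hw : w ∉ p.support) : (p.concat h).IsPath := by
  rw [← Walk.isPath_reverse_iff, Walk.reverse_concat, Walk.cons_isPath_iff,
    Walk.isPath_reverse_iff]
  exact ⟨hp, by simpa [Walk.support_reverse] using hw⟩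

lemma exists_leaf [Fintype V] [DecidableEq V] (hconn : G.Connected) (hacyc : G.IsAcyclic)
    (hcard : 2 ≤ Fintype.card V) (r : V) :
    ∃ ℓ nb, ℓ ≠ r ∧ G.Adj ℓ nb ∧ ∀ y, G.Adj ℓ y → y = nb := by
  classical
  set S : ℕ → Prop := fun n => ∃ x : V, ∃ p : G.Walk r x, p.IsPath ∧ p.length = n with hS
  have hS0 : S 0 := ⟨r, SimpleGraph.Walk.nil, by simp, rfl⟩
  set N := Nat.findGreatest S (Fintype.card V) with hN
  have hSN : S N := Nat.findGreatest_spec (Nat.zero_le _) hS0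
  obtain ⟨x, p, hp, hlen⟩ := hSN
  have hadjr : ∃ y, G.Adj r y := by
    have : Nontrivial V := Fintype.one_lt_card_iff_nontrivial.mp hcard
    obtain ⟨z, hz⟩ := exists_ne r
    obtain ⟨q⟩ := hconn.preconnected r z
    cases q with
    | nil => exact absurd rfl hz.symm
    | cons h _ => exact ⟨_, h⟩
  obtain ⟨y0, hy0⟩ := hadjr
  have hN1 : 1 ≤ N := by
    refine Nat.le_findGreatest (by omega) ⟨y0, (Path.singleton hy0 : G.Path r y0).1,
      (Path.singleton hy0 : G.Path r y0).2, by simp [Path.singleton]⟩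
  have hxr : x ≠ r := by
    rintro rfl
    rw [Walk.isPath_iff_eq_nil] at hp
    rw [hp] at hlen
    simp at hlen
    omega
  obtain ⟨z, hzx, q', hq'⟩ := (Walk.not_nil_iff (p := p.reverse)).mp (by exact Walk.not_nil_of_ne hxr)
  have hpdecomp : p = q'.reverse.concat hzx.symm := by
    have h0 := congrArg Walk.reverse hq'
    rw [Walk.reverse_reverse] at h0
    rw [h0, Walk.reverse_cons]
    rfl
  refine ⟨x, z, hxr, hzx, ?_⟩
  intro y hxy
  by_contra hyz
  have hyx : y ≠ x := hxy.ne'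
  by_cases hy : y ∈ p.support
  · have uniq := hacyc.path_unique ⟨p.dropUntil y hy, hp.dropUntil hy⟩
      (Path.singleton hxy.symm)
    have hwalk : p.dropUntil y hy = (Path.singleton hxy.symm : G.Path y x).1 :=
      congrArg Subtype.val uniq
    have h2 : p.edges = (p.takeUntil y hy).edges ++ [s(y, x)] := by
      conv_lhs => rw [← p.take_spec hy]
      rw [Walk.edges_append, hwalk]
      rfl
    have h3 : p.edges = q'.reverse.edges ++ [s(z, x)] := by
      conv_lhs => rw [hpdecomp]
      rw [Walk.edges_concat, List.concat_eq_append]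
    have h4 : s(y, x) = s(z, x) := by
      have h5 := congrArg List.reverse (h2.symm.trans h3)
      simp only [List.reverse_append, List.reverse_singleton, List.singleton_append,
        List.cons.injEq] at h5
      exact h5.1
    rw [Sym2.eq_iff] at h4
    rcases h4 with ⟨rfl, -⟩ | ⟨h6, -⟩
    · exact hyz rfl
    · exact hyx h6
  · have hext : (p.concat hxy).IsPath := concat_isPath hp hxy hy
    have hlt : (p.concat hxy).length < Fintype.card V := hext.length_lt
    rw [Walk.length_concat, hlen] at hlt
    have hS1 : S (N + 1) := ⟨_, p.concat hxy, hext, by rw [Walk.length_concat, hlen]⟩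
    have := Nat.le_findGreatest (le_of_lt hlt) hS1
    omega

lemma reachable_comap {ℓ : V} : ∀ {a b : V} (p : G.Walk a b) (ha : a ≠ ℓ) (hb : b ≠ ℓ),
    ℓ ∉ p.support →
    (G.comap (Subtype.val : {x : V // x ≠ ℓ} → V)).Reachable ⟨a, ha⟩ ⟨b, hb⟩
  | a, _, SimpleGraph.Walk.nil, ha, hb, _ => Reachable.refl _
  | a, b, SimpleGraph.Walk.cons (v := x) h q, ha, hb, hs => by
    have hx : x ≠ ℓ := fun hc => hs (by
      rw [Walk.support_cons]
      exact List.mem_cons_of_mem _ (hc ▸ q.start_mem_support))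
    have ih := reachable_comap q hx hb (fun hc => hs (by
      rw [Walk.support_cons]; exact List.mem_cons_of_mem _ hc))
    exact (Adj.reachable (show (G.comap (Subtype.val : {x : V // x ≠ ℓ} → V)).Adj ⟨a, ha⟩ ⟨x, hx⟩ from h)).trans ih
universe u

lemma exists_tour : ∀ (n : ℕ) (V : Type u) [Fintype V] [DecidableEq V]
    (G : SimpleGraph V), G.Connected → G.IsAcyclic → ∀ r : V,
    Fintype.card V ≤ n →
    ∃ c : G.Walk r r, (∀ v, v ∈ c.support) ∧ ∀ e, c.edges.count e ≤ 2 := by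
  intro n
  induction n with
  | zero =>
    intro V _ _ G hconn hacyc r hcard
    have : 0 < Fintype.card V := Fintype.card_pos_iff.mpr ⟨r⟩
    omega
  | succ n ih =>
    intro V _ _ G hconn hacyc r hcard
    by_cases h1 : Fintype.card V ≤ 1
    · refine ⟨SimpleGraph.Walk.nil, fun v => ?_, by simp⟩
      have hvr : v = r := Fintype.card_le_one_iff.mp h1 v r
      simp [hvr]
    · push_neg at h1
      obtain ⟨ℓ, nb, hℓr, hadj, huniq⟩ := exists_leaf hconn hacyc (by omega) r
      have hnbℓ : nb ≠ ℓ := fun hc => G.irrefl (hc ▸ hadj)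
      set V' := {x : V // x ≠ ℓ} with hV'
      set G' : SimpleGraph V' := G.comap Subtype.val with hG'
      have hG'conn : G'.Connected := by
        rw [connected_iff]
        refine ⟨fun a b => ?_, ⟨⟨r, Ne.symm hℓr⟩⟩⟩
        obtain ⟨w⟩ := hconn.preconnected a.1 b.1
        have hp : w.bypass.IsPath := w.bypass_isPath
        set p := w.bypass with hpdef
        have hℓp : ℓ ∉ p.support := by
          intro hmem
          set p1 := p.takeUntil ℓ hmem with hp1
          set p2 := p.dropUntil ℓ hmem with hp2
          -- nb is in p1.support
          obtain ⟨z1, hz1, q1, hq1⟩ := (Walk.not_nil_iff (p := p1.reverse)).mp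
            (by
              rw [Walk.not_nil_iff_lt_length, Walk.length_reverse,
                ← Walk.not_nil_iff_lt_length]
              exact Walk.not_nil_of_ne (a.2 : a.1 ≠ ℓ))
          have hz1nb : z1 = nb := huniq _ hz1
          have hnb1 : nb ∈ p1.support := by
            have : z1 ∈ p1.reverse.support := by
              rw [hq1, Walk.support_cons]
              exact List.mem_cons_of_mem _ q1.start_mem_support
            rw [Walk.support_reverse, List.mem_reverse] at this
            exact hz1nb ▸ this
          -- nb is in p2.support.tail
          obtain ⟨z2, hz2, q2, hq2⟩ := (Walk.not_nil_iff (p := p2)).mp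
            (Walk.not_nil_of_ne (fun hc => (b.2 : b.1 ≠ ℓ) hc.symm))
          have hz2nb : z2 = nb := huniq _ hz2
          have hnb2 : nb ∈ p2.support.tail := by
            rw [hq2, Walk.support_cons, List.tail_cons]
            exact hz2nb ▸ q2.start_mem_support
          -- contradiction with nodup
          have hnodup := hp.support_nodup
          rw [← p.take_spec hmem, Walk.support_append] at hnodup
          have hdisj := List.disjoint_of_nodup_append hnodup
          exact hdisj hnb1 hnb2
        exact reachable_comap p a.2 b.2 hℓp
      have hG'acyc : G'.IsAcyclic := by
        intro v c hc
        exact hacyc _ (hc.map (f := (⟨Subtype.val, fun h => h⟩ : G' →g G))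
          Subtype.val_injective)
      have hcardV' : Fintype.card V' ≤ n := by
        have h2 : Fintype.card V' = Fintype.card V - 1 := by
          have := Fintype.card_subtype_compl (fun x : V => x = ℓ)
          simp only [Fintype.card_subtype_eq] at this
          convert this using 2
        omega
      obtain ⟨c', hsupp', hcount'⟩ := ih V' G' hG'conn hG'acyc ⟨r, Ne.symm hℓr⟩ hcardV'
      let f : G' →g G := ⟨Subtype.val, fun h => h⟩
      set c0 : G.Walk r r := c'.map f with hc0
      have hsupp0 : ∀ v : V, v ≠ ℓ → v ∈ c0.support := by
        intro v hv
        rw [hc0, Walk.support_map]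
        exact List.mem_map.mpr ⟨⟨v, hv⟩, hsupp' _, rfl⟩
      have hℓnot : ℓ ∉ c0.support := by
        rw [hc0, Walk.support_map]
        intro hmem
        obtain ⟨⟨y, hy⟩, -, heq⟩ := List.mem_map.mp hmem
        exact hy heq
      have hcount0 : ∀ e, c0.edges.count e ≤ 2 := by
        intro e
        rw [hc0, Walk.edges_map]
        by_cases he : e ∈ c'.edges.map (Sym2.map f)
        · obtain ⟨e', he', rfl⟩ := List.mem_map.mp he
          rw [List.count_map_of_injective _ (Sym2.map ⇑f)
            (Sym2.map.injective (show Function.Injective (⇑f) from Subtype.val_injective))]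
          exact hcount' e'
        · rw [List.count_eq_zero.mpr he]
          omega
      have hnbmem : nb ∈ c0.support := hsupp0 nb hnbℓ
      set c1 := c0.takeUntil nb hnbmem with hc1
      set c2 := c0.dropUntil nb hnbmem with hc2
      set det : G.Walk nb nb := SimpleGraph.Walk.cons hadj.symm
        (SimpleGraph.Walk.cons hadj SimpleGraph.Walk.nil) with hdet
      refine ⟨c1.append (det.append c2), ?_, ?_⟩
      · intro v
        by_cases hv : v = ℓ
        · subst hv
          rw [Walk.mem_support_append_iff]
          right
          rw [Walk.mem_support_append_iff]
          left
          simp [hdet]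
        · have hmem := hsupp0 v hv
          rw [← c0.take_spec hnbmem, Walk.mem_support_append_iff] at hmem
          rw [Walk.mem_support_append_iff, Walk.mem_support_append_iff]
          tauto
      · intro e
        have hdetedges : det.edges = [s(nb, ℓ), s(ℓ, nb)] := by simp [hdet]
        have hsplit : (c1.append (det.append c2)).edges.count e =
            c1.edges.count e + (([s(nb, ℓ), s(ℓ, nb)] : List (Sym2 V)).count e
              + c2.edges.count e) := by
          rw [Walk.edges_append, Walk.edges_append, hdetedges, List.count_append,
            List.count_append]
        have hc12 : c1.edges.count e + c2.edges.count e = c0.edges.count e := by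
          rw [← List.count_append, ← Walk.edges_append, c0.take_spec]
        rw [hsplit]
        by_cases he : e = s(nb, ℓ)
        · subst he
          have h0 : c0.edges.count s(nb, ℓ) = 0 := List.count_eq_zero.mpr
            (fun hmem => hℓnot (Walk.snd_mem_support_of_mem_edges _ hmem))
          have hmid : ([s(nb, ℓ), s(ℓ, nb)] : List (Sym2 V)).count s(nb, ℓ) ≤ 2 := by
            simp [List.count_cons]
          omega
        · have hswap : s(ℓ, nb) = s(nb, ℓ) := Sym2.eq_swap
          have hmid : ([s(nb, ℓ), s(ℓ, nb)] : List (Sym2 V)).count e = 0 := by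
            rw [List.count_eq_zero]
            simp only [List.mem_cons, List.mem_singleton, List.not_mem_nil, or_false]
            rw [hswap]
            push_neg
            exact ⟨he, he⟩
          have := hcount0 e
          omega

end TreeEuler

/-- Euler-tour connector for low-diameter trees: if `G` is a tree whose simple paths all
have at most `β·h` edges, then for any nonempty `W ⊆ V` there is a collection `𝒫` of
paths with endpoints in `W` such that the graph `(W, 𝒫)` is connected, every edge of `G`
lies on at most `2` paths of `𝒫`, and every path of `𝒫` has at most `β·h` edges. -/
theorem tree_euler_connector {V : Type*} [Fintype V] [DecidableEq V]
    (G : SimpleGraph V) (hconn : G.Connected) (hacyc : G.IsAcyclic)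
    (β h : ℕ) (hh : 1 ≤ h) (hβ : 1 ≤ β)
    (hdiam : ∀ (u v : V) (p : G.Walk u v), p.IsPath → p.length ≤ β * h)
    (W : Set V) (hW : W.Nonempty) :
    ∃ P : List (Σ u : V, Σ v : V, G.Walk u v),
      (∀ q ∈ P, q.1 ∈ W ∧ q.2.1 ∈ W ∧ q.2.2.IsPath ∧ q.2.2.length ≤ β * h) ∧
      (SimpleGraph.fromRel (fun (a b : W) =>
          ∃ q ∈ P, q.1 = (a : V) ∧ q.2.1 = (b : V))).Connected ∧
      (∀ e : Sym2 V, (P.countP fun q => decide (e ∈ q.2.2.edges)) ≤ 2) := by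
  classical
  obtain ⟨r, hr⟩ := hW
  obtain ⟨c, hsupp, hcount⟩ :=
    TreeEuler.exists_tour (Fintype.card V) V G hconn hacyc r le_rfl
  set L := TreeEuler.go G W (SimpleGraph.Walk.nil : G.Walk r r) c with hL
  refine ⟨L.map (fun q => ⟨q.1, q.2.1, q.2.2.bypass⟩), ?_, ?_, ?_⟩
  · rintro q hq
    obtain ⟨q', hq', rfl⟩ := List.mem_map.mp hq
    obtain ⟨h1, h2⟩ := TreeEuler.go_endpoints _ c hr hr q' hq'
    exact ⟨h1, h2, q'.2.2.bypass_isPath, hdiam _ _ _ q'.2.2.bypass_isPath⟩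
  · have hgeq : (SimpleGraph.fromRel (fun (a b : W) =>
        ∃ q ∈ L.map (fun q => (⟨q.1, q.2.1, q.2.2.bypass⟩ : Σ u : V, Σ v : V, G.Walk u v)),
          q.1 = (a : V) ∧ q.2.1 = (b : V))) =
        SimpleGraph.fromRel (TreeEuler.relOf G W L) := by
      have hrel : ∀ a b : W, (∃ q ∈ L.map
          (fun q => (⟨q.1, q.2.1, q.2.2.bypass⟩ : Σ u : V, Σ v : V, G.Walk u v)),
          q.1 = (a : V) ∧ q.2.1 = (b : V)) ↔ TreeEuler.relOf G W L a b := by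
        intro a b
        constructor
        · rintro ⟨q, hq, h1, h2⟩
          obtain ⟨q', hq', rfl⟩ := List.mem_map.mp hq
          exact ⟨q', hq', h1, h2⟩
        · rintro ⟨q, hq, h1, h2⟩
          exact ⟨⟨q.1, q.2.1, q.2.2.bypass⟩, List.mem_map_of_mem hq, h1, h2⟩
      ext a b
      rw [fromRel_adj, fromRel_adj, hrel a b, hrel b a]
    rw [hgeq, connected_iff]
    refine ⟨fun a b => ?_, ⟨⟨r, hr⟩⟩⟩
    have ha := TreeEuler.go_connect (SimpleGraph.Walk.nil : G.Walk r r) c hr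
      (fun _ => rfl) a.1 (hsupp a.1) a.2
    have hb := TreeEuler.go_connect (SimpleGraph.Walk.nil : G.Walk r r) c hr
      (fun _ => rfl) b.1 (hsupp b.1) b.2
    exact ha.symm.trans hb
  · intro e
    rw [List.countP_map]
    have step1 : (L.countP ((fun q => decide (e ∈ q.2.2.edges)) ∘
        (fun q => (⟨q.1, q.2.1, q.2.2.bypass⟩ : Σ u : V, Σ v : V, G.Walk u v)))) ≤
        L.countP fun q => decide (e ∈ q.2.2.edges) := by
      refine List.countP_mono_left ?_
      intro q _ hq
      simp only [Function.comp_apply, decide_eq_true_eq] at hq ⊢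
      exact q.2.2.edges_bypass_subset hq
    refine step1.trans ((TreeEuler.go_countP _ c e).trans ?_)
    simpa using hcount e
end
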